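/- Let O be the complex octonion algebra and β ∈ O with (β | β) = 1 and n(β) = 0, where (x | y) = (x : ȳ) is the Hermitian product coming from the compact real form O_c. Then x = β̃(β̄x) + β̄̃(βx) for every x ∈ O; consequently O = ker L(β) ⊕ ker L(β̄) where L(β) is left multiplication by β, ker L(β) = Im L(β̃), and dim_ℂ ker L(β) = 4. -/

import Mathlib

/-!
Linearizing `n(xy) = n(x)n(y)` gives `ã(by) + b̃(ay) = (a : b) y`; for `a = β`, `b = β̄` with
`(β : β̄) = 1` this is the decomposition `x = β̃(β̄x) + β̄̃(βx)`. Complex conjugation conjugates the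
norm, so `n β̄ = 0` as well, and `β(β̃y) = n(β)y = 0` puts the two summands in `ker L(β)` and
`ker L(β̄)`, which are therefore complementary. Conjugation maps `ker L(β)` conjugate-linearly onto
`ker L(β̄)`, so both have dimension `8 / 2 = 4`.
-/

open QuadraticMap

/-- The Cayley conjugate `x̃ = (x : e)e − x` in a composition algebra. -/
def cconj {A : Type*} [NonAssocRing A] [Module ℂ A]
    [SMulCommClass ℂ A A] [IsScalarTower ℂ A A]
    (n : QuadraticForm ℂ A) (x : A) : A :=
  polar (⇑n) x 1 • (1 : A) - x

section CompositionAlgebra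

variable {R A : Type*} [CommRing R] [NonAssocRing A] [Module R A] (n : QuadraticForm R A)

lemma polar_mul_mul_left (hm : ∀ a b : A, n (a * b) = n a * n b) (x y z : A) :
    polar n (x * y) (x * z) = n x * polar n y z := by
  simp only [polar, ← mul_add, hm]
  ring

lemma polar_mul_add_polar_mul (hm : ∀ a b : A, n (a * b) = n a * n b) (x w y z : A) :
    polar n (x * y) (w * z) + polar n (w * y) (x * z) = polar n x w * polar n y z := by
  have h := polar_mul_mul_left n hm (x + w) y z
  have hxw : n (x + w) = polar n x w + n x + n w := by rw [polar]; ring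
  rw [add_mul, add_mul, polar_add_left, polar_add_right, polar_add_right, hxw,
    polar_mul_mul_left n hm x y z, polar_mul_mul_left n hm w y z] at h
  linear_combination h

lemma map_one_of_nondegenerate [IsDomain R] [Nontrivial A]
    (hnd : ∀ a : A, (∀ b : A, polar n a b = 0) → a = 0)
    (hm : ∀ a b : A, n (a * b) = n a * n b) : n 1 = 1 := by
  have hidem : n 1 * (n 1 - 1) = 0 := by
    linear_combination -(by simpa using hm 1 1 : n 1 = n 1 * n 1)
  refine sub_eq_zero.mp <|
    (mul_eq_zero.mp hidem).resolve_left fun h0 ↦ one_ne_zero (hnd 1 fun b ↦ ?_)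
  have hzero : ∀ x : A, n x = 0 := fun x ↦ by simpa [h0] using hm 1 x
  simp [polar, hzero]

end CompositionAlgebra

section CayleyConjugate

variable {A : Type*} [NonAssocRing A] [Module ℂ A] [SMulCommClass ℂ A A] [IsScalarTower ℂ A A]
  (n : QuadraticForm ℂ A)

lemma cconj_mul (x z : A) : cconj n x * z = polar n x 1 • z - x * z := by
  rw [cconj, sub_mul, smul_mul_assoc, one_mul]

lemma polar_cconj_one (hn1 : n 1 = 1) (x : A) : polar n (cconj n x) 1 = polar n x 1 := by
  rw [cconj, polar_sub_left, polar_smul_left, polar_self, hn1, smul_eq_mul, two_smul]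
  ring

lemma cconj_cconj (hn1 : n 1 = 1) (x : A) : cconj n (cconj n x) = x := by
  rw [cconj, polar_cconj_one n hn1, cconj, sub_sub_cancel]

lemma map_cconj (hn1 : n 1 = 1) (x : A) : n (cconj n x) = n x := by
  have h : polar n (polar n x 1 • 1) (-x)
      = n (polar n x 1 • 1 + -x) - n (polar n x 1 • 1) - n (-x) := rfl
  rw [polar_neg_right, polar_smul_left, polar_comm n 1 x, QuadraticMap.map_neg,
    QuadraticMap.map_smul, hn1, smul_eq_mul, smul_eq_mul, mul_one] at h
  rw [cconj, sub_eq_add_neg]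
  linear_combination -h

lemma polar_mul_left_eq_polar_cconj_mul (hm : ∀ a b : A, n (a * b) = n a * n b) (x y z : A) :
    polar n (x * y) z = polar n y (cconj n x * z) := by
  have h := polar_mul_add_polar_mul n hm x 1 y z
  rw [one_mul, one_mul] at h
  rw [cconj_mul, polar_sub_right, polar_smul_right, smul_eq_mul]
  linear_combination h

lemma cconj_mul_add_cconj_mul (hnd : ∀ a : A, (∀ b : A, polar n a b = 0) → a = 0)
    (hm : ∀ a b : A, n (a * b) = n a * n b) (hn1 : n 1 = 1) (a b y : A) :
    cconj n a * (b * y) + cconj n b * (a * y) = polar n a b • y := by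
  refine sub_eq_zero.mp (hnd _ fun z ↦ ?_)
  rw [polar_sub_left, polar_add_left,
    polar_mul_left_eq_polar_cconj_mul n hm (cconj n a) (b * y) z, cconj_cconj n hn1,
    polar_mul_left_eq_polar_cconj_mul n hm (cconj n b) (a * y) z, cconj_cconj n hn1,
    polar_mul_add_polar_mul n hm b a y z, polar_comm n b a, polar_smul_left, smul_eq_mul, sub_self]

lemma mul_cconj_mul (hnd : ∀ a : A, (∀ b : A, polar n a b = 0) → a = 0)
    (hm : ∀ a b : A, n (a * b) = n a * n b) (hn1 : n 1 = 1) (x y : A) :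
    x * (cconj n x * y) = n x • y := by
  refine sub_eq_zero.mp (hnd _ fun z ↦ ?_)
  rw [polar_sub_left, polar_mul_left_eq_polar_cconj_mul n hm x (cconj n x * y) z,
    polar_mul_mul_left n hm, map_cconj n hn1, polar_smul_left, smul_eq_mul, sub_self]

lemma mul_self_eq_polar_smul_sub_smul_one (hnd : ∀ a : A, (∀ b : A, polar n a b = 0) → a = 0)
    (hm : ∀ a b : A, n (a * b) = n a * n b) (hn1 : n 1 = 1) (x : A) :
    x * x = polar n x 1 • x - n x • (1 : A) := by
  have h := mul_cconj_mul n hnd hm hn1 x 1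
  rw [mul_one, cconj, mul_sub, mul_smul_comm, mul_one] at h
  rw [← h, sub_sub_cancel]

end CayleyConjugate

section IsotropicElement

open LinearMap

variable {A : Type*} [NonAssocRing A] [Module ℂ A] [SMulCommClass ℂ A A] [IsScalarTower ℂ A A]
  {n : QuadraticForm ℂ A}

lemma range_mulLeft_cconj_le_ker (hnd : ∀ a : A, (∀ b : A, polar n a b = 0) → a = 0)
    (hm : ∀ a b : A, n (a * b) = n a * n b) (hn1 : n 1 = 1) {β : A} (hβ : n β = 0) :
    range (mulLeft ℂ (cconj n β)) ≤ ker (mulLeft ℂ β) := by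
  rintro _ ⟨y, rfl⟩
  rw [mem_ker, mulLeft_apply, mulLeft_apply, mul_cconj_mul n hnd hm hn1, hβ, zero_smul]

lemma ker_mulLeft_eq_range_mulLeft_cconj (hnd : ∀ a : A, (∀ b : A, polar n a b = 0) → a = 0)
    (hm : ∀ a b : A, n (a * b) = n a * n b) (hn1 : n 1 = 1) {β γ : A} (hβ : n β = 0)
    (hβγ : polar n β γ = 1) :
    ker (mulLeft ℂ β) = range (mulLeft ℂ (cconj n β)) := by
  refine le_antisymm (fun x hx ↦ ⟨γ * x, ?_⟩) (range_mulLeft_cconj_le_ker hnd hm hn1 hβ)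
  have h := cconj_mul_add_cconj_mul n hnd hm hn1 β γ x
  rw [mem_ker, mulLeft_apply] at hx
  rwa [hx, mul_zero, add_zero, hβγ, one_smul] at h

lemma isCompl_ker_mulLeft (hnd : ∀ a : A, (∀ b : A, polar n a b = 0) → a = 0)
    (hm : ∀ a b : A, n (a * b) = n a * n b) (hn1 : n 1 = 1) {β γ : A} (hβ : n β = 0)
    (hγ : n γ = 0) (hβγ : polar n β γ = 1) :
    IsCompl (ker (mulLeft ℂ β)) (ker (mulLeft ℂ γ)) := by
  have hdecomp (x : A) : cconj n β * (γ * x) + cconj n γ * (β * x) = x := by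
    rw [cconj_mul_add_cconj_mul n hnd hm hn1, hβγ, one_smul]
  constructor
  · refine Submodule.disjoint_def.mpr fun x hβx hγx ↦ ?_
    rw [mem_ker, mulLeft_apply] at hβx hγx
    rw [← hdecomp x, hβx, hγx, mul_zero, mul_zero, add_zero]
  · refine codisjoint_iff.mpr (eq_top_iff.mpr fun x _ ↦ hdecomp x ▸ Submodule.add_mem_sup ?_ ?_)
    · exact range_mulLeft_cconj_le_ker hnd hm hn1 hβ ⟨_, rfl⟩
    · exact range_mulLeft_cconj_le_ker hnd hm hn1 hγ ⟨_, rfl⟩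

end IsotropicElement

lemma finrank_eq_of_conjLinearEquiv {V W : Type*} [AddCommGroup V] [Module ℂ V] [AddCommGroup W]
    [Module ℂ W] (e : V ≃ₛₗ[starRingEnd ℂ] W) : Module.finrank ℂ V = Module.finrank ℂ W := by
  have h := congrArg Cardinal.toNat <| lift_rank_eq_of_equiv_equiv (starRingEnd ℂ)
    e.toAddEquiv (Function.Involutive.bijective Complex.conj_conj) fun r v ↦ e.map_smulₛₗ r v
  rwa [Cardinal.toNat_lift, Cardinal.toNat_lift] at h

section ConjugateLinearAutomorphism

open LinearMap

variable {A : Type*} [NonAssocRing A] [Module ℂ A] (σ : A ≃ₛₗ[starRingEnd ℂ] A)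

lemma map_one_of_map_mul (hσ : ∀ x y : A, σ (x * y) = σ x * σ y) : σ 1 = 1 := by
  obtain ⟨u, hu⟩ := σ.surjective 1
  have h := hσ 1 u
  rwa [one_mul, hu, mul_one, eq_comm] at h

lemma map_ker_mulLeft [SMulCommClass ℂ A A] (hσ : ∀ x y : A, σ (x * y) = σ x * σ y) (β : A) :
    (ker (mulLeft ℂ β)).map (σ : A →ₛₗ[starRingEnd ℂ] A) = ker (mulLeft ℂ (σ β)) := by
  ext y
  rw [Submodule.map_equiv_eq_comap_symm, Submodule.mem_comap, mem_ker, mem_ker, mulLeft_apply,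
    mulLeft_apply, LinearEquiv.coe_coe, ← σ.map_eq_zero_iff, hσ, σ.apply_symm_apply]

lemma finrank_ker_mulLeft_conjLinearEquiv_apply [SMulCommClass ℂ A A]
    (hσ : ∀ x y : A, σ (x * y) = σ x * σ y) (β : A) :
    Module.finrank ℂ (ker (mulLeft ℂ (σ β))) = Module.finrank ℂ (ker (mulLeft ℂ β)) :=
  (finrank_eq_of_conjLinearEquiv (σ.ofSubmodules _ _ (map_ker_mulLeft σ hσ β))).symm

/-- Apply `σ` to `x² = t(x) x - n(x) 1` and compare with the same identity for `σ x`: either the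
traces already match, or `σ x` is a scalar. -/
lemma map_conjLinearEquiv_apply [SMulCommClass ℂ A A] [IsScalarTower ℂ A A] [Nontrivial A]
    {n : QuadraticForm ℂ A}
    (hnd : ∀ a : A, (∀ b : A, polar n a b = 0) → a = 0)
    (hm : ∀ a b : A, n (a * b) = n a * n b) (hn1 : n 1 = 1)
    (hσ : ∀ x y : A, σ (x * y) = σ x * σ y) (x : A) :
    n (σ x) = starRingEnd ℂ (n x) := by
  have h : (polar n (σ x) 1 - starRingEnd ℂ (polar n x 1)) • σ x
      = (n (σ x) - starRingEnd ℂ (n x)) • (1 : A) := by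
    have hx := congrArg σ (mul_self_eq_polar_smul_sub_smul_one n hnd hm hn1 x)
    rw [hσ, mul_self_eq_polar_smul_sub_smul_one n hnd hm hn1, map_sub, σ.map_smulₛₗ, σ.map_smulₛₗ,
      map_one_of_map_mul σ hσ] at hx
    rw [sub_smul, sub_smul]
    linear_combination (norm := module) hx
  by_cases htr : polar n (σ x) 1 = starRingEnd ℂ (polar n x 1)
  · rw [htr, sub_self, zero_smul, eq_comm, smul_eq_zero] at h
    exact sub_eq_zero.mp (h.resolve_right one_ne_zero)
  · set c := (polar n (σ x) 1 - starRingEnd ℂ (polar n x 1))⁻¹ * (n (σ x) - starRingEnd ℂ (n x))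
    have hσx : σ x = c • 1 := by
      rw [mul_smul, ← h, smul_smul, inv_mul_cancel₀ (sub_ne_zero.mpr htr), one_smul]
    have hx : x = starRingEnd ℂ c • 1 := σ.injective <| by
      rw [hσx, σ.map_smulₛₗ, map_one_of_map_mul σ hσ, Complex.conj_conj]
    rw [hσx, hx]
    simp only [QuadraticMap.map_smul, hn1, smul_eq_mul, mul_one, map_mul, Complex.conj_conj]

end ConjugateLinearAutomorphism

/-- Let `O` be the complex octonion algebra (an 8-dimensional composition
algebra over ℂ, equipped with the complex conjugation `x ↦ cc x` coming from its compact
real form: an involutive, additive, conjugate-linear map which is multiplicative), and let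
`β ∈ O` satisfy `(β | β) = 1` and `n β = 0`, where `(x | y) = (x : ȳ)`. Then
`x = β̃(β̄x) + (β̄)~(βx)` for every `x ∈ O`; consequently `O = ker L(β) ⊕ ker L(β̄)` where
`L(β)` is left multiplication by `β`, `ker L(β) = Im L(β̃)`, and `dim_ℂ ker L(β) = 4`. -/
theorem stmt_19 {O : Type*} [NonAssocRing O] [Module ℂ O]
    [SMulCommClass ℂ O O] [IsScalarTower ℂ O O]
    (n : QuadraticForm ℂ O)
    (hnd : ∀ a : O, (∀ b : O, polar (⇑n) a b = 0) → a = 0)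
    (hm : ∀ a b : O, n (a * b) = n a * n b)
    (hdim : Module.finrank ℂ O = 8)
    (cc : O → O)
    (hccadd : ∀ x y : O, cc (x + y) = cc x + cc y)
    (hccsmul : ∀ (z : ℂ) (x : O), cc (z • x) = (starRingEnd ℂ z) • cc x)
    (hccmul : ∀ x y : O, cc (x * y) = cc x * cc y)
    (hccinv : ∀ x : O, cc (cc x) = x)
    (β : O)
    (hβ1 : polar (⇑n) β (cc β) = 1)
    (hβn : n β = 0) :
    (∀ x : O, x = cconj n β * (cc β * x) + cconj n (cc β) * (β * x)) ∧
    IsCompl (LinearMap.ker (LinearMap.mulLeft ℂ β))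
            (LinearMap.ker (LinearMap.mulLeft ℂ (cc β))) ∧
    LinearMap.ker (LinearMap.mulLeft ℂ β)
      = LinearMap.range (LinearMap.mulLeft ℂ (cconj n β)) ∧
    Module.finrank ℂ (LinearMap.ker (LinearMap.mulLeft ℂ β)) = 4 := by
  have : Module.Finite ℂ O := Module.finite_of_finrank_pos (by omega)
  have : Nontrivial O := Module.nontrivial_of_finrank_pos (R := ℂ) (by omega)
  have hn1 : n 1 = 1 := map_one_of_nondegenerate n hnd hm
  let σ : O ≃ₛₗ[starRingEnd ℂ] O :=
    .ofInvolutive { toFun := cc, map_add' := hccadd, map_smul' := hccsmul } hccinv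
  have hccβ : n (cc β) = 0 := by
    rw [show cc β = σ β from rfl, map_conjLinearEquiv_apply σ hnd hm hn1 hccmul, hβn, map_zero]
  have hcompl := isCompl_ker_mulLeft hnd hm hn1 hβn hccβ hβ1
  refine ⟨fun x ↦ ?_, hcompl, ker_mulLeft_eq_range_mulLeft_cconj hnd hm hn1 hβn hβ1, ?_⟩
  · rw [cconj_mul_add_cconj_mul n hnd hm hn1, hβ1, one_smul]
  · have hsum := Submodule.finrank_add_eq_of_isCompl hcompl
    rw [show cc β = σ β from rfl, finrank_ker_mulLeft_conjLinearEquiv_apply σ hccmul, hdim] at hsum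
    omega
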